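/- arXiv:2006.00733 — 5 statements merged into one kernel-verified Lean document; each statement's English description precedes it below -/
import Mathlib

section
/- Let A be an integral domain such that there exists a positive integer n₀ for which every matrix in SL_2(A) is a product of at most n₀ elementary matrices (i.e., matrices of the form (1 a; 0 1) or (1 0; a 1) with a ∈ A). If x, y ∈ A are such that there exist z, w ∈ A with the 2×2 matrix (x y; z w) in SL_2(A), then the matrix [x y] lies in EBIG^{2n₀}_{n₀+2}(A). -/
open Matrix

/-- A 2×2 matrix `M` over an integral domain `R` lies in `EBIG n m` if there exist
`s ≤ n` matrices `E₁, …, E_s` in `SL₂(R)` and `1 ≤ r ≤ m` idempotent matrices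
`A₁, …, A_r` such that `(E₁⋯E_s)⁻¹ M (E₁⋯E_s) = A₁ A₂ ⋯ A_r`. -/
def EBIG {R : Type*} [CommRing R] (n m : ℕ) (M : Matrix (Fin 2) (Fin 2) R) : Prop :=
  ∃ s : ℕ, s ≤ n ∧ ∃ E : Fin s → Matrix.SpecialLinearGroup (Fin 2) R,
    ∃ r : ℕ, 1 ≤ r ∧ r ≤ m ∧ ∃ A : Fin r → Matrix (Fin 2) (Fin 2) R,
      (∀ i, A i * A i = A i) ∧
      (((List.ofFn E).prod⁻¹ : Matrix.SpecialLinearGroup (Fin 2) R) :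
          Matrix (Fin 2) (Fin 2) R) * M *
        ((List.ofFn E).prod : Matrix (Fin 2) (Fin 2) R) = (List.ofFn A).prod

/-- An elementary 2×2 matrix over `R`: of the form `(1 a; 0 1)` or `(1 0; a 1)`. -/
def IsElementary {R : Type*} [CommRing R] (M : Matrix (Fin 2) (Fin 2) R) : Prop :=
  (∃ a : R, M = !![1, a; 0, 1]) ∨ (∃ a : R, M = !![1, 0; a, 1])


lemma elem_inv {R : Type*} [CommRing R] {M : Matrix (Fin 2) (Fin 2) R}
    (h : IsElementary M) : ∃ N, M * N = 1 ∧ N * M = 1 := by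
  rcases h with ⟨a, rfl⟩ | ⟨a, rfl⟩
  · exact ⟨!![1, -a; 0, 1], by simp [Matrix.mul_fin_two, Matrix.one_fin_two],
      by simp [Matrix.mul_fin_two, Matrix.one_fin_two]⟩
  · exact ⟨!![1, 0; -a, 1], by simp [Matrix.mul_fin_two, Matrix.one_fin_two],
      by simp [Matrix.mul_fin_two, Matrix.one_fin_two]⟩

lemma list_inv {R : Type*} [CommRing R] :
    ∀ ℓ : List (Matrix (Fin 2) (Fin 2) R), (∀ L ∈ ℓ, IsElementary L) →
      ∃ D, ℓ.prod * D = 1 ∧ D * ℓ.prod = 1 := by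
  intro ℓ
  induction ℓ with
  | nil => exact fun _ => ⟨1, by simp, by simp⟩
  | cons L ℓ' ih =>
    intro hmem
    obtain ⟨D, hD1, hD2⟩ := ih (fun x hx => hmem x (List.mem_cons_of_mem _ hx))
    obtain ⟨N, hN1, hN2⟩ := elem_inv (hmem L List.mem_cons_self)
    refine ⟨D * N, ?_, ?_⟩
    · rw [List.prod_cons]
      calc L * ℓ'.prod * (D * N) = L * (ℓ'.prod * D) * N := by simp [mul_assoc]
        _ = 1 := by rw [hD1, mul_one, hN1]
    · rw [List.prod_cons]
      calc D * N * (L * ℓ'.prod) = D * (N * L) * ℓ'.prod := by simp [mul_assoc]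
        _ = 1 := by rw [hN2, mul_one, hD2]

lemma key_idem {R : Type*} [CommRing R] :
    ∀ ℓ : List (Matrix (Fin 2) (Fin 2) R), (∀ L ∈ ℓ, IsElementary L) →
    ∃ q : List (Matrix (Fin 2) (Fin 2) R), (∀ Q ∈ q, Q * Q = Q) ∧
      q.length ≤ ℓ.length ∧
      ℓ.prod * !![(1:R),0;0,0] = q.prod * !![(1:R),0;0,0] := by
  intro ℓ
  induction ℓ using List.reverseRecOn with
  | nil => exact fun _ => ⟨[], by simp, by simp, rfl⟩
  | append_singleton ℓ' L ih =>
    intro hmem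
    obtain ⟨q, hq, hlen, heq⟩ := ih (fun x hx => hmem x (by simp [hx]))
    have hL := hmem L (by simp)
    have hprodapp : (ℓ' ++ [L]).prod = ℓ'.prod * L := by simp
    rcases hL with ⟨a, rfl⟩ | ⟨a, rfl⟩
    · -- upper: L * P = P
      have hLP : !![(1:R), a; 0, 1] * !![(1:R),0;0,0] = !![(1:R),0;0,0] := by
        simp [Matrix.mul_fin_two]
      refine ⟨q, hq, by simp; omega, ?_⟩
      rw [hprodapp, mul_assoc, hLP, heq]
    · -- lower
      obtain ⟨D, hD1, hD2⟩ := list_inv ℓ' (fun x hx => hmem x (by simp [hx]))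
      set R0 : Matrix (Fin 2) (Fin 2) R := !![1,0;a,0] with hR0
      have hLP : !![(1:R), 0; a, 1] * !![(1:R),0;0,0] = R0 := by
        simp [hR0, Matrix.mul_fin_two]
      have hR0idem : R0 * R0 = R0 := by simp [hR0, Matrix.mul_fin_two]
      have hR0P : R0 * !![(1:R),0;0,0] = R0 := by simp [hR0, Matrix.mul_fin_two]
      refine ⟨(ℓ'.prod * R0 * D) :: q, ?_, by simp; omega, ?_⟩
      · intro Q hQ
        rcases List.mem_cons.mp hQ with rfl | hQ
        · calc ℓ'.prod * R0 * D * (ℓ'.prod * R0 * D)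
              = ℓ'.prod * R0 * (D * ℓ'.prod) * R0 * D := by simp [mul_assoc]
            _ = ℓ'.prod * (R0 * R0) * D := by rw [hD2]; simp [mul_assoc]
            _ = ℓ'.prod * R0 * D := by rw [hR0idem]
        · exact hq Q hQ
      · rw [hprodapp, mul_assoc, hLP, List.prod_cons]
        calc ℓ'.prod * R0 = ℓ'.prod * R0 * (D * ℓ'.prod) * !![(1:R),0;0,0] := by
              rw [hD2]; simp [mul_assoc, hR0P]
          _ = ℓ'.prod * R0 * D * (ℓ'.prod * !![(1:R),0;0,0]) := by simp [mul_assoc]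
          _ = ℓ'.prod * R0 * D * (q.prod * !![(1:R),0;0,0]) := by rw [heq]
          _ = ℓ'.prod * R0 * D * q.prod * !![(1:R),0;0,0] := by simp [mul_assoc]

/-- If every matrix in `SL₂(A)` is a product of at most `n₀` elementary matrices, and
`(x y; z w) ∈ SL₂(A)` for some `z, w`, then `[x y] ∈ EBIG^{2n₀}_{n₀+2}(A)`. -/
theorem stmt_2 {A : Type*} [CommRing A] [IsDomain A] (n₀ : ℕ) (hn₀ : 0 < n₀)
    (helem : ∀ M : Matrix.SpecialLinearGroup (Fin 2) A, ∃ t : ℕ, t ≤ n₀ ∧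
      ∃ L : Fin t → Matrix (Fin 2) (Fin 2) A, (∀ i, IsElementary (L i)) ∧
        (M : Matrix (Fin 2) (Fin 2) A) = (List.ofFn L).prod)
    (x y : A) (h : ∃ z w : A, Matrix.det !![x, y; z, w] = 1) :
    EBIG (2 * n₀) (n₀ + 2) (!![x, y; 0, 0] : Matrix (Fin 2) (Fin 2) A) := by
  obtain ⟨z, w, hdet⟩ := h
  set g : Matrix.SpecialLinearGroup (Fin 2) A := ⟨!![x, y; z, w], hdet⟩ with hg
  obtain ⟨t, ht, L, hLel, hLprod⟩ := helem g
  obtain ⟨q, hq, hlen, heq⟩ := key_idem (List.ofFn L) (by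
    intro M hM
    rw [List.mem_ofFn] at hM
    obtain ⟨i, rfl⟩ := hM
    exact hLel i)
  have hlen' : q.length ≤ t := by simpa using hlen
  set P : Matrix (Fin 2) (Fin 2) A := !![(1:A),0;0,0] with hP
  refine ⟨1, by omega, fun _ => g⁻¹, (q ++ [P]).length, by simp, by simp; omega,
    (q ++ [P]).get, ?_, ?_⟩
  · intro i
    have : (q ++ [P]).get i ∈ q ++ [P] := List.get_mem _ _
    rcases List.mem_append.mp this with h1 | h1
    · exact hq _ h1
    · simp only [List.mem_singleton] at h1
      rw [h1, hP]
      ext i j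
      fin_cases i <;> fin_cases j <;> simp [Matrix.mul_apply, Fin.sum_univ_succ]
  · rw [List.ofFn_get]
    have hprodE : (List.ofFn (fun _ : Fin 1 => g⁻¹)).prod = g⁻¹ := by simp
    rw [hprodE, inv_inv]
    have hM : !![x, y; 0, 0] = P * (g : Matrix (Fin 2) (Fin 2) A) := by
      rw [hg, hP]
      ext i j
      fin_cases i <;> fin_cases j <;>
        simp [Matrix.mul_apply, Fin.sum_univ_succ, Matrix.SpecialLinearGroup.coe_mk]
    rw [hM]
    have hginv : (g : Matrix (Fin 2) (Fin 2) A) * ((g⁻¹ : Matrix.SpecialLinearGroup (Fin 2) A) : Matrix (Fin 2) (Fin 2) A) = 1 := by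
      rw [← Matrix.SpecialLinearGroup.coe_mul, mul_inv_cancel,
        Matrix.SpecialLinearGroup.coe_one]
    calc (g : Matrix (Fin 2) (Fin 2) A) * (P * (g : Matrix (Fin 2) (Fin 2) A)) *
          ((g⁻¹ : Matrix.SpecialLinearGroup (Fin 2) A) : Matrix (Fin 2) (Fin 2) A)
        = (g : Matrix (Fin 2) (Fin 2) A) * P *
          ((g : Matrix (Fin 2) (Fin 2) A) * ((g⁻¹ : Matrix.SpecialLinearGroup (Fin 2) A) : Matrix (Fin 2) (Fin 2) A)) := by
          simp [mul_assoc]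
      _ = (g : Matrix (Fin 2) (Fin 2) A) * P := by rw [hginv, mul_one]
      _ = (List.ofFn L).prod * P := by rw [hLprod]
      _ = q.prod * P := heq
      _ = (q ++ [P]).prod := by simp
end

section
/- Let k = ℚ(√α) be a real quadratic number field, where α is a positive square-free integer, and let O_k be its ring of integers. Then for every x ∈ O_k, each of the matrices (x 0; 1 0) and (x 0; −1 0) lies in EBIG^19_11(O_k). -/
open Matrix NumberField

lemma ebig_aux {R : Type*} [CommRing R] (s t : R) :
    EBIG 19 11 (!![s * t, 0; t, 0] : Matrix (Fin 2) (Fin 2) R) := by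
  refine ⟨0, by norm_num, fun i => i.elim0, 2, by norm_num, by norm_num,
    ![!![0, s; 0, 1], !![1, 0; t, 0]], ?_, ?_⟩
  · intro i
    fin_cases i <;>
      · ext i j
        fin_cases i <;> fin_cases j <;>
          simp [Matrix.mul_apply, Fin.sum_univ_succ]
  · simp only [List.ofFn_zero, List.prod_nil, inv_one]
    ext i j
    fin_cases i <;> fin_cases j <;>
      simp [Matrix.mul_apply, Fin.sum_univ_succ, Matrix.SpecialLinearGroup.coe_one]

/-- Over the ring of integers of a real quadratic number field, for every `x` the matrices
`(x 0; 1 0)` and `(x 0; -1 0)` lie in `EBIG^19_11(O_k)`. -/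
theorem stmt_5 (α : ℤ) (hαpos : 0 < α) (hαsf : Squarefree α)
    (K : Type*) [Field K] [NumberField K]
    (hrank : Module.finrank ℚ K = 2) (hsqrt : ∃ s : K, s * s = (α : K))
    (x : 𝓞 K) :
    EBIG 19 11 (!![x, 0; 1, 0] : Matrix (Fin 2) (Fin 2) (𝓞 K)) ∧
    EBIG 19 11 (!![x, 0; -1, 0] : Matrix (Fin 2) (Fin 2) (𝓞 K)) := by
  constructor
  · have := ebig_aux (R := 𝓞 K) x 1
    simpa using this
  · have := ebig_aux (R := 𝓞 K) (-x) (-1)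
    simpa using this
end

section
/- Let k = ℚ(√α), where α is a positive square-free integer with α ≡ 2 or 3 (mod 4), and let O_k be its ring of integers. Let x, y be elements of O_k, and let m be a positive integer and n a nonnegative integer. Then there exist an integer h ∈ ℤ and an element β ∈ O_k such that: if [h β] lies in EBIG^n_m(O_k), then the matrix [x y] lies in EBIG^{n+3}_{m+24}(O_k). -/
open Matrix NumberField

lemma EBIG_mono {R : Type*} [CommRing R] {n m n' m' : ℕ} (hn : n ≤ n') (hm : m ≤ m')
    {M : Matrix (Fin 2) (Fin 2) R} (h : EBIG n m M) : EBIG n' m' M := by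
  obtain ⟨s, hs, E, r, hr1, hrm, A, hA, heq⟩ := h
  exact ⟨s, hs.trans hn, E, r, hr1, hrm.trans hm, A, hA, heq⟩

lemma EBIG_transfer {R : Type*} [CommRing R] (n m : ℕ) (x y e c h : R)
    (hh : h = x + c * (x * e + y)) :
    EBIG n m !![h, x * e + y; 0, 0] → EBIG (n + 3) (m + 24) !![x, y; 0, 0] := by
  rintro ⟨s, hs, Es, r, hr1, hrm, As, hA, heq⟩
  have hdet : Matrix.det !![1 + e * c, e; c, 1] = 1 := by
    simp [Matrix.det_fin_two_of]
  set Esl : SpecialLinearGroup (Fin 2) R := ⟨!![1 + e * c, e; c, 1], hdet⟩ with hEsl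
  set P : SpecialLinearGroup (Fin 2) R := (List.ofFn Es).prod with hP
  set X : Matrix (Fin 2) (Fin 2) R := (↑P : Matrix (Fin 2) (Fin 2) R) with hX
  set Xi : Matrix (Fin 2) (Fin 2) R := (↑(P⁻¹) : Matrix (Fin 2) (Fin 2) R) with hXi
  have hXiX : Xi * X = 1 := by
    rw [hXi, hX]; exact congrArg Subtype.val (inv_mul_cancel P)
  have hXXi : X * Xi = 1 := by
    rw [hXi, hX]; exact congrArg Subtype.val (mul_inv_cancel P)
  set M₁ : Matrix (Fin 2) (Fin 2) R := !![1 + c, 1; -(c * (1 + c)), -c] with hM₁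
  set M₂ : Matrix (Fin 2) (Fin 2) R := !![(0:R), 0; 1, 1] with hM₂
  have hM₁sq : M₁ * M₁ = M₁ := by
    rw [hM₁]; ext i j; fin_cases i <;> fin_cases j <;>
      simp [Matrix.mul_apply, Fin.sum_univ_two] <;> ring
  have hM₂sq : M₂ * M₂ = M₂ := by
    rw [hM₂]; ext i j; fin_cases i <;> fin_cases j <;>
      simp [Matrix.mul_apply, Fin.sum_univ_two]
  refine ⟨s + 1, by omega, Fin.cons Esl Es, r + 1 + 1, by omega, by omega,
    Fin.cons (Xi * M₁ * X) (Fin.cons (Xi * M₂ * X) As), ?_, ?_⟩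
  · intro i
    refine Fin.cases ?_ (fun j => ?_) i
    · show (Xi * M₁ * X) * (Xi * M₁ * X) = Xi * M₁ * X
      calc (Xi * M₁ * X) * (Xi * M₁ * X) = Xi * (M₁ * (X * Xi) * M₁) * X := by
            simp only [Matrix.mul_assoc]
        _ = Xi * M₁ * X := by rw [hXXi, Matrix.mul_one, hM₁sq]
    · refine Fin.cases ?_ (fun k => ?_) j
      · show (Xi * M₂ * X) * (Xi * M₂ * X) = Xi * M₂ * X
        calc (Xi * M₂ * X) * (Xi * M₂ * X) = Xi * (M₂ * (X * Xi) * M₂) * X := by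
              simp only [Matrix.mul_assoc]
          _ = Xi * M₂ * X := by rw [hXXi, Matrix.mul_one, hM₂sq]
      · exact hA k
  · have hlistE : (List.ofFn (Fin.cons Esl Es)).prod = Esl * P := by
      rw [List.ofFn_succ]
      simp [hP]
    have hlistA : (List.ofFn (Fin.cons (Xi * M₁ * X) (Fin.cons (Xi * M₂ * X) As))).prod
        = (Xi * M₁ * X) * ((Xi * M₂ * X) * (List.ofFn As).prod) := by
      rw [List.ofFn_succ]
      simp only [Fin.cons_zero, Fin.cons_succ, List.prod_cons]
      rw [List.ofFn_succ]
      simp only [Fin.cons_zero, Fin.cons_succ, List.prod_cons]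
    rw [hlistE, hlistA, ← heq]
    have hcoe : (↑((Esl * P)⁻¹) : Matrix (Fin 2) (Fin 2) R) = Xi * (↑(Esl⁻¹) : Matrix (Fin 2) (Fin 2) R) := by
      rw [_root_.mul_inv_rev]; rfl
    have hcoe2 : (↑(Esl * P) : Matrix (Fin 2) (Fin 2) R) = (↑Esl : Matrix (Fin 2) (Fin 2) R) * X := by
      rfl
    rw [hcoe, hcoe2]
    have hEinv : (↑(Esl⁻¹) : Matrix (Fin 2) (Fin 2) R) = !![1, -e; -c, 1 + e * c] := by
      show Matrix.adjugate !![1 + e * c, e; c, 1] = _; rw [Matrix.adjugate_fin_two_of]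
    have hcenter : (↑(Esl⁻¹) : Matrix (Fin 2) (Fin 2) R) * !![x, y; 0, 0] * (↑Esl : Matrix (Fin 2) (Fin 2) R)
        = M₁ * M₂ * !![h, x * e + y; 0, 0] := by
      rw [hEinv, hEsl, hM₁, hM₂]
      show !![1, -e; -c, 1 + e * c] * !![x, y; 0, 0] * !![1 + e * c, e; c, 1]
        = !![1 + c, 1; -(c * (1 + c)), -c] * !![(0:R), 0; 1, 1] * !![h, x * e + y; 0, 0]
      ext i j
      fin_cases i <;> fin_cases j <;>
        simp [Matrix.mul_apply, Fin.sum_univ_two, hh] <;> ring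
    have hXZ : ∀ Z : Matrix (Fin 2) (Fin 2) R, X * (Xi * Z) = Z := by
      intro Z; rw [← Matrix.mul_assoc, hXXi, Matrix.one_mul]
    have key : (↑(Esl⁻¹) : Matrix (Fin 2) (Fin 2) R) * (!![x, y; 0, 0] * ((↑Esl : Matrix (Fin 2) (Fin 2) R) * X))
        = M₁ * (M₂ * (!![h, x * e + y; 0, 0] * X)) := by
      calc (↑(Esl⁻¹) : Matrix (Fin 2) (Fin 2) R) * (!![x, y; 0, 0] * ((↑Esl : Matrix (Fin 2) (Fin 2) R) * X))
          = ((↑(Esl⁻¹) : Matrix (Fin 2) (Fin 2) R) * !![x, y; 0, 0] * (↑Esl : Matrix (Fin 2) (Fin 2) R)) * X := by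
            simp only [Matrix.mul_assoc]
        _ = (M₁ * M₂ * !![h, x * e + y; 0, 0]) * X := by rw [hcenter]
        _ = M₁ * (M₂ * (!![h, x * e + y; 0, 0] * X)) := by simp only [Matrix.mul_assoc]
    simp only [Matrix.mul_assoc]
    simp only [hXZ]
    rw [key]

lemma rat_num_eq (a : ℚ) : (a.num : ℚ) = a * (a.den : ℚ) := by
  have h := Rat.num_div_den a
  rw [div_eq_iff (by exact_mod_cast a.den_nz : ((a.den:ℚ) ≠ 0))] at h
  exact h

lemma span_pair_rat (a b : ℚ) :
    ∃ c : ℚ, Submodule.span ℤ {a} ⊔ Submodule.span ℤ {b} = Submodule.span ℤ {c} := by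
  by_cases ha : a = 0
  · exact ⟨b, by simp [ha]⟩
  by_cases hb : b = 0
  · exact ⟨a, by simp [hb]⟩
  set na : ℤ := a.num * (b.den : ℤ) with hna
  set nb : ℤ := b.num * (a.den : ℤ) with hnb
  set D : ℚ := ((a.den : ℚ) * (b.den : ℚ)) with hD
  have hD0 : D ≠ 0 := by rw [hD]; positivity
  have hae : (na : ℚ) = a * D := by
    rw [hna, hD]; push_cast [rat_num_eq a]; ring
  have hbe : (nb : ℚ) = b * D := by
    rw [hnb, hD]; push_cast [rat_num_eq b]; ring
  set g : ℕ := Int.gcd na nb with hg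
  refine ⟨(g : ℚ) / D, ?_⟩
  apply le_antisymm
  · apply sup_le
    · rw [Submodule.span_le, Set.singleton_subset_iff, SetLike.mem_coe,
        Submodule.mem_span_singleton]
      obtain ⟨k, hk⟩ : (g:ℤ) ∣ na := Int.gcd_dvd_left _ _
      refine ⟨k, ?_⟩
      have hkq : (na : ℚ) = (g : ℚ) * (k : ℚ) := by exact_mod_cast hk
      rw [zsmul_eq_mul, mul_div_assoc', mul_comm, div_eq_iff hD0]
      rw [← hkq, hae]
    · rw [Submodule.span_le, Set.singleton_subset_iff, SetLike.mem_coe,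
        Submodule.mem_span_singleton]
      obtain ⟨k, hk⟩ : (g:ℤ) ∣ nb := Int.gcd_dvd_right _ _
      refine ⟨k, ?_⟩
      have hkq : (nb : ℚ) = (g : ℚ) * (k : ℚ) := by exact_mod_cast hk
      rw [zsmul_eq_mul, mul_div_assoc', mul_comm, div_eq_iff hD0]
      rw [← hkq, hbe]
  · rw [Submodule.span_le, Set.singleton_subset_iff, SetLike.mem_coe]
    have hbez := Int.gcd_eq_gcd_ab na nb
    set u : ℤ := Int.gcdA na nb
    set v : ℤ := Int.gcdB na nb
    apply Submodule.mem_sup.mpr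
    refine ⟨u • a, ?_, v • b, ?_, ?_⟩
    · exact Submodule.smul_mem _ u (Submodule.mem_span_singleton_self a)
    · exact Submodule.smul_mem _ v (Submodule.mem_span_singleton_self b)
    · have hq : ((g:ℤ):ℚ) = (na:ℚ) * (u:ℚ) + (nb:ℚ) * (v:ℚ) := by exact_mod_cast hbez
      rw [zsmul_eq_mul, zsmul_eq_mul, eq_div_iff hD0] at *
      linear_combination (-(u:ℚ)) * hae - (v:ℚ) * hbe - hq

lemma fg_submodule_rat_cyclic (T : Submodule ℤ ℚ) (hT : T.FG) :
    ∃ g : ℚ, T = Submodule.span ℤ {g} := by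
  obtain ⟨s, rfl⟩ := hT
  classical
  induction s using Finset.induction_on with
  | empty => exact ⟨0, by simp⟩
  | @insert a s' hna ih =>
    obtain ⟨g, hg⟩ := ih
    obtain ⟨c, hc⟩ := span_pair_rat a g
    refine ⟨c, ?_⟩
    rw [Finset.coe_insert, Submodule.span_insert, hg, hc]

lemma exists_e1 (x₁ x₂ y₁ y₂ : ℤ) (hx₂ : x₂ ≠ 0)
    (hS : x₂ * y₁ - x₁ * y₂ ≠ 0) :
    ∃ e₁ : ℤ, (↑(Int.gcd (y₁ + e₁ * x₁) (y₂ + e₁ * x₂)) : ℤ) ∣ x₂ := by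
  set S : ℤ := x₂ * y₁ - x₁ * y₂ with hSdef
  set Sn : ℕ := S.natAbs with hSn
  set xn : ℕ := x₂.natAbs with hxn
  have hSn0 : Sn ≠ 0 := by simpa [hSn] using hS
  have hxn0 : xn ≠ 0 := by simpa [hxn] using hx₂
  set Pf : Finset ℕ := Sn.primeFactors.filter
      (fun p => ¬ ((p:ℤ) ^ (xn.factorization p + 1) ∣ y₂)) with hPf
  set e₁ : ℤ := ((Pf.prod id : ℕ) : ℤ) with he₁
  refine ⟨e₁, ?_⟩
  set w₁ : ℤ := y₁ + e₁ * x₁ with hw₁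
  set w₂ : ℤ := y₂ + e₁ * x₂ with hw₂
  have hinv : x₂ * w₁ - x₁ * w₂ = S := by rw [hw₁, hw₂]; ring
  -- key claim
  have key : ∀ p : ℕ, p.Prime → p ∣ Sn → ¬ ((p:ℤ) ^ (xn.factorization p + 1) ∣ w₂) := by
    intro p pp hpS hdvd
    have hpx : (p:ℤ) ^ (xn.factorization p) ∣ x₂ := by
      have h2 : ((p ^ xn.factorization p : ℕ) : ℤ) ∣ (xn : ℤ) :=
        Int.natCast_dvd_natCast.mpr (Nat.ordProj_dvd xn p)
      have h3 : (xn : ℤ) ∣ x₂ := by rw [hxn]; exact Int.natAbs_dvd.mpr dvd_rfl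
      push_cast at h2
      exact h2.trans h3
    by_cases hgood : ¬ ((p:ℤ) ^ (xn.factorization p + 1) ∣ y₂)
    · -- p ∈ Pf, so p ∣ e₁ and p^(a+1) ∣ e₁ * x₂, hence p^(a+1) ∣ y₂ : contradiction
      have hpPf : p ∈ Pf := by
        rw [hPf, Finset.mem_filter]
        exact ⟨Nat.mem_primeFactors.mpr ⟨pp, hpS, hSn0⟩, hgood⟩
      have hpe : (p:ℤ) ∣ e₁ := by
        rw [he₁]
        exact_mod_cast Int.natCast_dvd_natCast.mpr (Finset.dvd_prod_of_mem id hpPf)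
      have hpex : (p:ℤ) ^ (xn.factorization p + 1) ∣ e₁ * x₂ := by
        rw [pow_succ]
        have := mul_dvd_mul hpx hpe
        rwa [mul_comm x₂ e₁] at this
      have : (p:ℤ) ^ (xn.factorization p + 1) ∣ y₂ := by
        have := dvd_sub hdvd hpex
        rwa [hw₂, add_sub_cancel_right] at this
      exact hgood this
    · push_neg at hgood
      -- bad case : p ∤ e₁, p^(a+1) ∣ w₂ gives p^(a+1) ∣ e₁ x₂, contradiction
      have hpe : ¬ (p:ℤ) ∣ e₁ := by
        rw [he₁]
        intro hcon
        have hnat : p ∣ Pf.prod id := by exact_mod_cast hcon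
        obtain ⟨q, hqPf, hpq⟩ := (Nat.Prime.prime pp).exists_mem_finset_dvd hnat
        have hq : q.Prime := by
          have := (Finset.mem_filter.mp hqPf).1
          exact Nat.prime_of_mem_primeFactors this
        have : p = q := (Nat.prime_dvd_prime_iff_eq pp hq).mp hpq
        subst this
        have := (Finset.mem_filter.mp hqPf).2
        exact this hgood
      have hpex : (p:ℤ) ^ (xn.factorization p + 1) ∣ e₁ * x₂ := by
        have := dvd_sub hdvd hgood
        rwa [hw₂, add_sub_cancel_left] at this
      -- transfer to ℕ
      have hnat : p ^ (xn.factorization p + 1) ∣ e₁.natAbs * x₂.natAbs := by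
        have h5 := Int.natAbs_dvd_natAbs.mpr hpex
        rw [Int.natAbs_mul] at h5
        simpa [Int.natAbs_pow] using h5
      have hcop : Nat.Coprime (p ^ (xn.factorization p + 1)) e₁.natAbs := by
        apply Nat.Coprime.pow_left
        rw [Nat.Prime.coprime_iff_not_dvd pp]
        intro hcon
        exact hpe (by rwa [Int.natCast_dvd] )
      have : p ^ (xn.factorization p + 1) ∣ xn := by
        rw [hxn]
        exact (Nat.Coprime.dvd_of_dvd_mul_left hcop hnat)
      exact Nat.pow_succ_factorization_not_dvd hxn0 pp this
  -- now conclude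
  set D : ℕ := Int.gcd w₁ w₂ with hD
  have hDS : (D:ℤ) ∣ S := by
    rw [← hinv]
    exact dvd_sub (Dvd.dvd.mul_left (Int.gcd_dvd_left _ _) x₂) (Dvd.dvd.mul_left (Int.gcd_dvd_right _ _) x₁)
  have hDSn : D ∣ Sn := by
    rw [hSn, ← Int.natAbs_dvd_natAbs] at *
    simpa using hDS
  by_cases hSn1 : Sn = 1
  · have hD1 : D = 1 := Nat.eq_one_of_dvd_one (hSn1 ▸ hDSn)
    have hD1' : (D:ℤ) = 1 := by exact_mod_cast hD1
    rw [hD1']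
    exact one_dvd x₂
  · obtain ⟨p₀, hp₀, hp₀S⟩ := Nat.exists_prime_and_dvd hSn1
    have hw₂0 : w₂ ≠ 0 := by
      intro hcon
      exact key p₀ hp₀ hp₀S (by rw [hcon]; exact dvd_zero _)
    have hD0 : D ≠ 0 := by
      rw [hD]
      intro hcon
      rw [Int.gcd_eq_zero_iff] at hcon
      apply hS
      rw [← hinv, hcon.1, hcon.2]
      ring
    have hDw₂ : D ∣ w₂.natAbs := by
      have h6 : (D:ℤ) ∣ w₂ := Int.gcd_dvd_right _ _
      have h7 := Int.natAbs_dvd_natAbs.mpr h6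
      simpa using h7
    have hw₂n0 : w₂.natAbs ≠ 0 := by simpa using hw₂0
    have hfact : D.factorization ≤ xn.factorization := by
      intro p
      by_cases pp : p.Prime
      · by_cases hpS : p ∣ Sn
        · have h1 : D.factorization p ≤ w₂.natAbs.factorization p :=
            (Nat.factorization_le_iff_dvd hD0 hw₂n0).mpr hDw₂ p
          have h2 : w₂.natAbs.factorization p ≤ xn.factorization p := by
            by_contra hcon
            push_neg at hcon
            have h3 : p ^ (xn.factorization p + 1) ∣ w₂.natAbs :=
              (Nat.Prime.pow_dvd_iff_le_factorization pp hw₂n0).mpr hcon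
            have h4 : (p:ℤ) ^ (xn.factorization p + 1) ∣ w₂ := by
              have h8 := Int.natCast_dvd_natCast.mpr h3
              push_cast at h8
              exact h8.trans ((abs_dvd _ _).mpr dvd_rfl)
            exact key p pp hpS h4
          exact h1.trans h2
        · have : D.factorization p ≤ Sn.factorization p :=
            (Nat.factorization_le_iff_dvd hD0 hSn0).mpr hDSn p
          rw [Nat.factorization_eq_zero_of_not_dvd hpS] at this
          exact this.trans (Nat.zero_le _)
      · rw [Nat.factorization_eq_zero_of_not_prime _ pp]
        exact Nat.zero_le _
    have hDxn : D ∣ xn := (Nat.factorization_le_iff_dvd hD0 hxn0).mp hfact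
    have : (D:ℤ) ∣ (xn:ℤ) := Int.natCast_dvd_natCast.mpr hDxn
    exact this.trans (by rw [hxn]; exact Int.natAbs_dvd.mpr dvd_rfl)

lemma exists_span_theta (K : Type*) [Field K] [NumberField K]
    (hrank : Module.finrank ℚ K = 2) (s : K)
    (hsO : ∃ sO : 𝓞 K, (sO : K) = s)
    (hsirr : ∀ r : ℚ, algebraMap ℚ K r ≠ s) :
    ∃ t : 𝓞 K, ∀ z : 𝓞 K, ∃ a b : ℤ, z = (a : 𝓞 K) + (b : 𝓞 K) * t := by
  classical
  have hli : LinearIndependent ℚ ![(1 : K), s] := by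
    rw [LinearIndependent.pair_iff]
    intro p q hpq
    by_cases hq : q = 0
    · subst hq
      simp only [smul_zero, zero_smul, add_zero, smul_eq_mul, mul_one] at hpq
      have : p • (1:K) = 0 := by simpa using hpq
      constructor
      · have := smul_eq_zero.mp this
        simpa using this
      · rfl
    · exfalso
      apply hsirr (-p / q)
      have hqK : (q:K) ≠ 0 := by exact_mod_cast hq
      have hpq' : (p:K) + (q:K) * s = 0 := by
        rw [Algebra.smul_def, Algebra.smul_def, mul_one] at hpq
        simpa using hpq
      have hs' : s = ((-p/q : ℚ) : K) := by
        push_cast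
        rw [eq_div_iff hqK]
        linear_combination hpq'
      rw [hs']
      simp [eq_ratCast]
  -- basis
  have hcard : Fintype.card (Fin 2) = Module.finrank ℚ K := by simp [hrank]
  let B : Module.Basis (Fin 2) ℚ K := basisOfLinearIndependentOfCardEqFinrank hli hcard
  have hB : ⇑B = ![(1:K), s] := coe_basisOfLinearIndependentOfCardEqFinrank hli hcard
  let φ : K →ₗ[ℚ] ℚ := B.coord 1
  let ψ : 𝓞 K →ₗ[ℤ] ℚ :=
    (φ.restrictScalars ℤ).comp (IsScalarTower.toAlgHom ℤ (𝓞 K) K).toLinearMap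
  have hψ : ∀ z : 𝓞 K, ψ z = φ (z : K) := fun z => rfl
  let T : Submodule ℤ ℚ := LinearMap.range ψ
  have hTfg : T.FG := by
    have htop : (⊤ : Submodule ℤ (𝓞 K)).FG := Module.finite_def.mp inferInstance
    have := Submodule.FG.map ψ htop
    rwa [Submodule.map_top] at this
  obtain ⟨g, hgT⟩ := fg_submodule_rat_cyclic T hTfg
  -- φ s = 1
  have hφ1 : φ (1:K) = 0 := by
    have h0 : (1:K) = B 0 := by rw [hB]; rfl
    rw [h0]
    show B.repr (B 0) 1 = 0
    rw [B.repr_self]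
    simp
  have hφs : φ s = 1 := by
    have h1 : s = B 1 := by rw [hB]; rfl
    rw [h1]
    show B.repr (B 1) 1 = 1
    rw [B.repr_self]
    simp
  -- decomposition of any element of K in the image of 𝓞 K
  have hdecomp : ∀ ζ : K, ζ = algebraMap ℚ K (B.repr ζ 0) + (B.repr ζ 1) • s := by
    intro ζ
    have h2 := B.sum_repr ζ
    rw [Fin.sum_univ_two] at h2
    have hB0 : B 0 = 1 := by rw [hB]; rfl
    have hB1 : B 1 = s := by rw [hB]; rfl
    rw [hB0, hB1] at h2
    conv_lhs => rw [← h2]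
    simp [Algebra.smul_def]
  -- 1 ∈ T
  obtain ⟨sO, hsOe⟩ := hsO
  have h1T : (1:ℚ) ∈ T := ⟨sO, by rw [hψ, hsOe, hφs]⟩
  -- d • g = 1
  rw [hgT, Submodule.mem_span_singleton] at h1T
  obtain ⟨d, hd⟩ := h1T
  -- t
  have hgmem : g ∈ T := by rw [hgT]; exact Submodule.mem_span_singleton_self g
  obtain ⟨t, ht⟩ := hgmem
  refine ⟨t, fun z => ?_⟩
  have hz : ψ z ∈ T := ⟨z, rfl⟩
  rw [hgT, Submodule.mem_span_singleton] at hz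
  obtain ⟨k, hk⟩ := hz
  have hz0 : ψ (z - k • t) = 0 := by
    rw [map_sub, map_zsmul, ht, hk, sub_self]
  set ζ : K := ((z - k • t : 𝓞 K) : K) with hζ
  have hζ1 : B.repr ζ 1 = 0 := by
    have : φ ζ = 0 := by rw [← hψ, hz0]
    exact this
  have hζeq : ζ = algebraMap ℚ K (B.repr ζ 0) := by
    have := hdecomp ζ
    rw [hζ1] at this
    simpa using this
  have hint : IsIntegral ℤ ζ := RingOfIntegers.isIntegral_coe _
  rw [hζeq] at hint
  have hint2 : IsIntegral ℤ (B.repr ζ 0) :=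
    (isIntegral_algebraMap_iff (algebraMap ℚ K).injective).mp hint
  obtain ⟨a, ha⟩ := IsIntegrallyClosed.isIntegral_iff.mp hint2
  refine ⟨a, k, ?_⟩
  have hζa : ζ = ((a : 𝓞 K) : K) := by
    rw [hζeq, ← ha]
    simp
  have : z - k • t = (a : 𝓞 K) := by
    apply RingOfIntegers.coe_injective  -- name check
    exact hζa
  have hzz : z = (a : 𝓞 K) + k • t := by
    rw [← this]; ring
  rw [hzz, zsmul_eq_mul]

lemma int_gcd_add_mul (a b c : ℤ) : Int.gcd a (b + c * a) = Int.gcd a b := by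
  apply Nat.dvd_antisymm
  · apply Int.natCast_dvd_natCast.mp
    apply Int.dvd_coe_gcd
    · exact Int.gcd_dvd_left _ _
    · have h1 : (↑(Int.gcd a (b + c * a)) : ℤ) ∣ (b + c * a) := Int.gcd_dvd_right _ _
      have h2 : (↑(Int.gcd a (b + c * a)) : ℤ) ∣ c * a := (Int.gcd_dvd_left _ _).mul_left c
      have := dvd_sub h1 h2
      simpa using this
  · apply Int.natCast_dvd_natCast.mp
    apply Int.dvd_coe_gcd
    · exact Int.gcd_dvd_left _ _
    · exact dvd_add (Int.gcd_dvd_right _ _) ((Int.gcd_dvd_left _ _).mul_left c)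

/-- For `ℚ(√α)` with α ≡ 2, 3 (mod 4): for all `x, y ∈ O_k` there exist `h ∈ ℤ` and
`β ∈ O_k` such that if `[h β] ∈ EBIG^n_m(O_k)` then `[x y] ∈ EBIG^{n+3}_{m+24}(O_k)`. -/
theorem stmt_6 (α : ℤ) (hαpos : 0 < α) (hαsf : Squarefree α)
    (hαmod : α % 4 = 2 ∨ α % 4 = 3)
    (K : Type*) [Field K] [NumberField K]
    (hrank : Module.finrank ℚ K = 2) (hsqrt : ∃ s : K, s * s = (α : K))
    (x y : 𝓞 K) (m n : ℕ) (hm : 0 < m) :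
    ∃ (h : ℤ) (β : 𝓞 K),
      EBIG n m (!![(h : 𝓞 K), β; 0, 0] : Matrix (Fin 2) (Fin 2) (𝓞 K)) →
      EBIG (n + 3) (m + 24) (!![x, y; 0, 0] : Matrix (Fin 2) (Fin 2) (𝓞 K)) := by
  classical
  by_cases hxZ : ∃ hz : ℤ, x = ((hz : ℤ) : 𝓞 K)
  · obtain ⟨hz, hxe⟩ := hxZ
    refine ⟨hz, y, fun H => ?_⟩
    have hMeq : (!![((hz:ℤ) : 𝓞 K), y; 0, 0] : Matrix (Fin 2) (Fin 2) (𝓞 K))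
        = !![x, y; 0, 0] := by rw [hxe]
    rw [hMeq] at H
    exact EBIG_mono (by omega) (by omega) H
  · obtain ⟨s, hs2⟩ := hsqrt
    have hα1 : α ≠ 1 := by rcases hαmod with h | h <;> omega
    have hsint : IsIntegral ℤ s := by
      refine ⟨Polynomial.X ^ 2 - Polynomial.C α, Polynomial.monic_X_pow_sub_C α two_ne_zero, ?_⟩
      simp only [Polynomial.eval₂_sub, Polynomial.eval₂_X_pow, Polynomial.eval₂_C]
      rw [sq, hs2]
      simp
    have hsirr : ∀ r : ℚ, algebraMap ℚ K r ≠ s := by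
      intro r hr
      have hr2 : r * r = (α : ℚ) := by
        have : algebraMap ℚ K (r * r) = algebraMap ℚ K ((α:ℚ)) := by
          rw [_root_.map_mul, hr, hs2]
          simp
        exact (algebraMap ℚ K).injective this
      have hrint : IsIntegral ℤ r := by
        refine ⟨Polynomial.X ^ 2 - Polynomial.C α, Polynomial.monic_X_pow_sub_C α two_ne_zero, ?_⟩
        simp only [Polynomial.eval₂_sub, Polynomial.eval₂_X_pow, Polynomial.eval₂_C]
        rw [sq, hr2]
        simp
      obtain ⟨j, hj⟩ := IsIntegrallyClosed.isIntegral_iff.mp hrint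
      have hjj : j * j = α := by
        have : ((j * j : ℤ) : ℚ) = ((α : ℤ) : ℚ) := by
          push_cast
          rw [show ((j:ℚ)) = r from by exact_mod_cast hj]
          exact_mod_cast hr2
        exact_mod_cast this
      have := hαsf j (by rw [← hjj])
      rcases Int.isUnit_iff.mp this with h1 | h1 <;> (subst h1; omega)
    obtain ⟨t, hspan⟩ := exists_span_theta K hrank s ⟨⟨s, hsint⟩, rfl⟩ hsirr
    obtain ⟨A, B, hAB⟩ := hspan (t * t)
    obtain ⟨x₁, x₂, hx⟩ := hspan x
    obtain ⟨y₁, y₂, hy⟩ := hspan y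
    have hx₂ : x₂ ≠ 0 := by
      intro h0
      exact hxZ ⟨x₁, by rw [hx, h0]; push_cast; ring⟩
    set q : ℤ := x₁ * x₁ + B * x₁ * x₂ - A * x₂ * x₂ with hqdef
    have hq : q ≠ 0 := by
      intro h0
      have hmul : x * (((x₁ + B * x₂ : ℤ) : 𝓞 K) - ((x₂:ℤ) : 𝓞 K) * t) = ((q:ℤ) : 𝓞 K) := by
        rw [hqdef, hx]
        push_cast
        linear_combination (-((x₂:𝓞 K) * (x₂ : 𝓞 K))) * hAB
      rw [h0] at hmul
      push_cast at hmul
      rcases mul_eq_zero.mp hmul with hc | hc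
      · exact hxZ ⟨0, by rw [hc]; simp⟩
      · apply hxZ
        refine ⟨2 * x₁ + B * x₂, ?_⟩
        have : x = ((2 * x₁ + B * x₂ : ℤ) : 𝓞 K) := by
          push_cast
          linear_combination hx - hc
        exact this
    -- choose y'
    obtain ⟨e₂, y'₁, y'₂, hy', hS'⟩ :
        ∃ (e₂ y'₁ y'₂ : ℤ), ((y'₁ : 𝓞 K) + (y'₂ : 𝓞 K) * t = y + (e₂ : 𝓞 K) * (x * t))
          ∧ x₂ * y'₁ - x₁ * y'₂ ≠ 0 := by
      by_cases hR : x₂ * y₁ - x₁ * y₂ = 0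
      · refine ⟨1, y₁ + x₂ * A, y₂ + x₁ + x₂ * B, ?_, ?_⟩
        · push_cast
          linear_combination -hy - ((x₂:𝓞 K)) * hAB - t * hx
        · have : x₂ * (y₁ + x₂ * A) - x₁ * (y₂ + x₁ + x₂ * B) = -q := by
            rw [hqdef]; linear_combination hR
          rw [this]
          exact neg_ne_zero.mpr hq
      · exact ⟨0, y₁, y₂, by push_cast; linear_combination -hy, hR⟩
    obtain ⟨e₁, hgcd⟩ := exists_e1 x₁ x₂ y'₁ y'₂ hx₂ hS'
    set w₁ : ℤ := y'₁ + e₁ * x₁ with hw₁def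
    set w₂ : ℤ := y'₂ + e₁ * x₂ with hw₂def
    have hw : x * ((e₁ : 𝓞 K) + (e₂ : 𝓞 K) * t) + y = ((w₁:ℤ) : 𝓞 K) + ((w₂:ℤ) : 𝓞 K) * t := by
      rw [hw₁def, hw₂def]
      push_cast
      linear_combination ((e₁ : 𝓞 K)) * hx - hy'
    -- Bezout
    have hGeq : Int.gcd w₂ (w₁ + B * w₂) = Int.gcd w₁ w₂ := by
      rw [int_gcd_add_mul w₂ w₁ B, Int.gcd_comm]
    have hGdvd : (↑(Int.gcd w₂ (w₁ + B * w₂)) : ℤ) ∣ (-x₂) := by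
      rw [hGeq]
      exact dvd_neg.mpr hgcd
    obtain ⟨k, hk⟩ := hGdvd
    have hbez := Int.gcd_eq_gcd_ab w₂ (w₁ + B * w₂)
    set u : ℤ := Int.gcdA w₂ (w₁ + B * w₂) with hu
    set v : ℤ := Int.gcdB w₂ (w₁ + B * w₂) with hv
    set c₁ : ℤ := u * k with hc₁
    set c₂ : ℤ := v * k with hc₂
    have hc : c₁ * w₂ + c₂ * (w₁ + B * w₂) = -x₂ := by
      rw [hc₁, hc₂, hk]
      linear_combination (-k) * hbez
    set hfin : ℤ := x₁ + c₁ * w₁ + c₂ * w₂ * A with hfindef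
    refine ⟨hfin, x * ((e₁ : 𝓞 K) + (e₂ : 𝓞 K) * t) + y, fun H => ?_⟩
    have hcc : ((c₁ : 𝓞 K) * (w₂ : 𝓞 K) + (c₂ : 𝓞 K) * ((w₁: 𝓞 K) + (B : 𝓞 K) * (w₂ : 𝓞 K))
        : 𝓞 K) = -((x₂:ℤ) : 𝓞 K) := by
      exact_mod_cast congrArg (fun z : ℤ => ((z : ℤ) : 𝓞 K)) hc
    have hhc : ((hfin : ℤ) : 𝓞 K)
        = ((x₁:ℤ) : 𝓞 K) + (c₁ : 𝓞 K) * (w₁ : 𝓞 K) + (c₂ : 𝓞 K) * (w₂ : 𝓞 K) * (A : 𝓞 K) := by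
      rw [hfindef]; push_cast; ring
    have hh : ((hfin : ℤ) : 𝓞 K) = x + ((c₁ : 𝓞 K) + (c₂ : 𝓞 K) * t)
        * (x * ((e₁ : 𝓞 K) + (e₂ : 𝓞 K) * t) + y) := by
      linear_combination hhc - hx - ((c₁ : 𝓞 K) + (c₂ : 𝓞 K) * t) * hw
        - ((c₂ : 𝓞 K) * (w₂ : 𝓞 K)) * hAB - t * hcc
    exact EBIG_transfer n m x y _ _ _ hh H
end

section
/- Let A be an integral domain. Let M and N be 2×2 matrices over A such that M lies in EBIG^{n₁}_{m₁}(A) and N lies in EBIG^{n₂}_{m₂}(A), where m₁, m₂ are positive integers and n₁, n₂ are nonnegative integers. Then the product MN lies in EBIG^{min(n₁,n₂)}_{m₁+m₂}(A). -/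
open Matrix

private lemma conj_list_prod {G : Type*} [Monoid G] (p q : G) (hpq : p * q = 1)
    (hqp : q * p = 1) : ∀ l : List G,
    (l.map (fun X => p * X * q)).prod = p * l.prod * q := by
  intro l
  induction l with
  | nil => simp [hpq]
  | cons a t ih =>
      simp only [List.map_cons, List.prod_cons, ih]
      calc p * a * q * (p * t.prod * q) = p * a * (q * p) * t.prod * q := by
            simp [mul_assoc]
        _ = p * (a * t.prod) * q := by rw [hqp]; simp [mul_assoc]

/-- If `M ∈ EBIG^{n₁}_{m₁}(A)` and `N ∈ EBIG^{n₂}_{m₂}(A)`, then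
`MN ∈ EBIG^{min(n₁,n₂)}_{m₁+m₂}(A)`. -/
theorem stmt_9 {A : Type*} [CommRing A] [IsDomain A]
    (M N : Matrix (Fin 2) (Fin 2) A) (n₁ n₂ m₁ m₂ : ℕ)
    (hm₁ : 0 < m₁) (hm₂ : 0 < m₂)
    (hM : EBIG n₁ m₁ M) (hN : EBIG n₂ m₂ N) :
    EBIG (min n₁ n₂) (m₁ + m₂) (M * N) := by
  obtain ⟨s₁, _, E₁, r₁, hr₁, hr₁', A₁, hA₁, hEq₁⟩ := hM
  obtain ⟨s₂, _, E₂, r₂, hr₂, hr₂', A₂, hA₂, hEq₂⟩ := hN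
  set P : Matrix.SpecialLinearGroup (Fin 2) A := (List.ofFn E₁).prod with hP
  set Q : Matrix.SpecialLinearGroup (Fin 2) A := (List.ofFn E₂).prod with hQ
  have hPinv : (P : Matrix (Fin 2) (Fin 2) A) * ((P⁻¹ : _) : Matrix (Fin 2) (Fin 2) A) = 1 := by
    rw [← Matrix.SpecialLinearGroup.coe_mul, mul_inv_cancel, Matrix.SpecialLinearGroup.coe_one]
  have hPinv' : ((P⁻¹ : _) : Matrix (Fin 2) (Fin 2) A) * (P : Matrix (Fin 2) (Fin 2) A) = 1 := by
    rw [← Matrix.SpecialLinearGroup.coe_mul, inv_mul_cancel, Matrix.SpecialLinearGroup.coe_one]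
  have hQinv : (Q : Matrix (Fin 2) (Fin 2) A) * ((Q⁻¹ : _) : Matrix (Fin 2) (Fin 2) A) = 1 := by
    rw [← Matrix.SpecialLinearGroup.coe_mul, mul_inv_cancel, Matrix.SpecialLinearGroup.coe_one]
  have hQinv' : ((Q⁻¹ : _) : Matrix (Fin 2) (Fin 2) A) * (Q : Matrix (Fin 2) (Fin 2) A) = 1 := by
    rw [← Matrix.SpecialLinearGroup.coe_mul, inv_mul_cancel, Matrix.SpecialLinearGroup.coe_one]
  -- M = P * (prod A₁) * P⁻¹ and N = Q * (prod A₂) * Q⁻¹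
  have hMeq : M = (P : Matrix (Fin 2) (Fin 2) A) * (List.ofFn A₁).prod *
      ((P⁻¹ : _) : Matrix (Fin 2) (Fin 2) A) := by
    rw [← hEq₁]
    calc M = ((P : Matrix (Fin 2) (Fin 2) A) * ((P⁻¹ : _) : Matrix (Fin 2) (Fin 2) A)) * M *
          (((P : Matrix (Fin 2) (Fin 2) A)) * ((P⁻¹ : _) : Matrix (Fin 2) (Fin 2) A)) := by
            rw [hPinv]; simp
      _ = _ := by noncomm_ring
  have hNeq : N = (Q : Matrix (Fin 2) (Fin 2) A) * (List.ofFn A₂).prod *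
      ((Q⁻¹ : _) : Matrix (Fin 2) (Fin 2) A) := by
    rw [← hEq₂]
    calc N = ((Q : Matrix (Fin 2) (Fin 2) A) * ((Q⁻¹ : _) : Matrix (Fin 2) (Fin 2) A)) * N *
          (((Q : Matrix (Fin 2) (Fin 2) A)) * ((Q⁻¹ : _) : Matrix (Fin 2) (Fin 2) A)) := by
            rw [hQinv]; simp
      _ = _ := by noncomm_ring
  -- the conjugated idempotents
  set C : Fin r₁ → Matrix (Fin 2) (Fin 2) A :=
    fun i => (P : Matrix (Fin 2) (Fin 2) A) * A₁ i * ((P⁻¹ : _) : Matrix (Fin 2) (Fin 2) A)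
    with hC
  set D : Fin r₂ → Matrix (Fin 2) (Fin 2) A :=
    fun i => (Q : Matrix (Fin 2) (Fin 2) A) * A₂ i * ((Q⁻¹ : _) : Matrix (Fin 2) (Fin 2) A)
    with hD
  refine ⟨0, Nat.zero_le _, fun i => 1, r₁ + r₂, le_trans hr₁ (Nat.le_add_right _ _),
    Nat.add_le_add hr₁' hr₂', Fin.append C D, ?_, ?_⟩
  · intro i
    refine Fin.addCases (fun j => ?_) (fun j => ?_) i
    · simp only [Fin.append_left, hC]
      calc (P : Matrix (Fin 2) (Fin 2) A) * A₁ j * ((P⁻¹ : _) : Matrix (Fin 2) (Fin 2) A) *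
            ((P : Matrix (Fin 2) (Fin 2) A) * A₁ j * ((P⁻¹ : _) : Matrix (Fin 2) (Fin 2) A))
          = (P : Matrix (Fin 2) (Fin 2) A) * A₁ j *
            (((P⁻¹ : _) : Matrix (Fin 2) (Fin 2) A) * (P : Matrix (Fin 2) (Fin 2) A)) *
            A₁ j * ((P⁻¹ : _) : Matrix (Fin 2) (Fin 2) A) := by noncomm_ring
        _ = (P : Matrix (Fin 2) (Fin 2) A) * (A₁ j * A₁ j) *
            ((P⁻¹ : _) : Matrix (Fin 2) (Fin 2) A) := by rw [hPinv']; noncomm_ring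
        _ = _ := by rw [hA₁ j]
    · simp only [Fin.append_right, hD]
      calc (Q : Matrix (Fin 2) (Fin 2) A) * A₂ j * ((Q⁻¹ : _) : Matrix (Fin 2) (Fin 2) A) *
            ((Q : Matrix (Fin 2) (Fin 2) A) * A₂ j * ((Q⁻¹ : _) : Matrix (Fin 2) (Fin 2) A))
          = (Q : Matrix (Fin 2) (Fin 2) A) * A₂ j *
            (((Q⁻¹ : _) : Matrix (Fin 2) (Fin 2) A) * (Q : Matrix (Fin 2) (Fin 2) A)) *
            A₂ j * ((Q⁻¹ : _) : Matrix (Fin 2) (Fin 2) A) := by noncomm_ring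
        _ = (Q : Matrix (Fin 2) (Fin 2) A) * (A₂ j * A₂ j) *
            ((Q⁻¹ : _) : Matrix (Fin 2) (Fin 2) A) := by rw [hQinv']; noncomm_ring
        _ = _ := by rw [hA₂ j]
  · have hCprod : (List.ofFn C).prod =
        (P : Matrix (Fin 2) (Fin 2) A) * (List.ofFn A₁).prod *
          ((P⁻¹ : _) : Matrix (Fin 2) (Fin 2) A) := by
      have := conj_list_prod (P : Matrix (Fin 2) (Fin 2) A)
        ((P⁻¹ : _) : Matrix (Fin 2) (Fin 2) A) hPinv hPinv' (List.ofFn A₁)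
      rw [List.map_ofFn] at this
      exact this
    have hDprod : (List.ofFn D).prod =
        (Q : Matrix (Fin 2) (Fin 2) A) * (List.ofFn A₂).prod *
          ((Q⁻¹ : _) : Matrix (Fin 2) (Fin 2) A) := by
      have := conj_list_prod (Q : Matrix (Fin 2) (Fin 2) A)
        ((Q⁻¹ : _) : Matrix (Fin 2) (Fin 2) A) hQinv hQinv' (List.ofFn A₂)
      rw [List.map_ofFn] at this
      exact this
    have happend : (List.ofFn (Fin.append C D)).prod = (List.ofFn C).prod * (List.ofFn D).prod := by
      rw [List.ofFn_add, List.prod_append]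
      congr 1
      · exact congrArg List.prod (congrArg List.ofFn (by funext i; simp [Fin.append_left]))
      · exact congrArg List.prod (congrArg List.ofFn (by funext i; simp [Fin.append_right]))
    simp only [List.ofFn_zero, List.prod_nil, inv_one, Matrix.SpecialLinearGroup.coe_one,
      one_mul, mul_one]
    rw [happend, hCprod, hDprod, hMeq, hNeq]
end

section
/- Let z₁, z₂, w₁, w₂ be integers with z₁ ≠ 0, gcd(z₁, w₁) = 1, gcd(z₂, w₂) = 1, and z₁w₂ − z₂w₁ ≠ 0, and let λ, ε be positive integers with gcd(λ, ε) = 1 and λ odd. Then there exists an integer e such that gcd(λ·(z₁e + w₁), ε·(z₂e + w₂)) = 1. -/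
private lemma exists_avoid {p : ℕ} (hp : p.Prime) {z w : ℤ} (h : Int.gcd z w = 1) :
    ∃ r : ℤ, ¬ (p : ℤ) ∣ z * r + w := by
  by_contra hc
  push_neg at hc
  have h0 := hc 0
  have h1' := hc 1
  have hz : (p : ℤ) ∣ z := by
    have := dvd_sub h1' h0
    simpa using this
  have hw : (p : ℤ) ∣ w := by simpa using h0
  have hpg : (p : ℤ) ∣ (Int.gcd z w : ℤ) := Int.dvd_coe_gcd hz hw
  rw [h] at hpg
  have : p ∣ 1 := Int.natCast_dvd_natCast.mp (by exact_mod_cast hpg)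
  exact hp.ne_one (Nat.dvd_one.mp this)

private lemma not_dvd_both {p : ℕ} (hp : p.Prime) {x y : ℤ} (h : Int.gcd x y = 1)
    (hx : (p : ℤ) ∣ x) (hy : (p : ℤ) ∣ y) : False := by
  have hpg : (p : ℤ) ∣ (Int.gcd x y : ℤ) := Int.dvd_coe_gcd hx hy
  rw [h] at hpg
  have : p ∣ 1 := Int.natCast_dvd_natCast.mp (by exact_mod_cast hpg)
  exact hp.ne_one (Nat.dvd_one.mp this)

private lemma crt_finset (S : Finset ℕ) (hS : ∀ p ∈ S, Nat.Prime p) (r : ℕ → ℤ) :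
    ∃ e : ℤ, ∀ p ∈ S, (p : ℤ) ∣ e - r p := by
  classical
  induction S using Finset.induction_on with
  | empty => exact ⟨0, by simp⟩
  | @insert a s ha ih =>
    obtain ⟨e₀, he₀⟩ := ih (fun p hp => hS p (Finset.mem_insert_of_mem hp))
    have hpa : a.Prime := hS a (Finset.mem_insert_self a s)
    have hcop : Nat.Coprime a (∏ p ∈ s, p) := by
      apply Nat.Coprime.prod_right
      intro q hq
      exact (Nat.coprime_primes hpa (hS q (Finset.mem_insert_of_mem hq))).mpr
        (fun hh => ha (hh ▸ hq))
    have hic : IsCoprime (a : ℤ) ((∏ p ∈ s, p : ℕ) : ℤ) := by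
      rw [Int.isCoprime_iff_gcd_eq_one, Int.gcd_natCast_natCast]
      exact hcop
    obtain ⟨u, v, hbez⟩ := hic
    set P : ℤ := ((∏ p ∈ s, p : ℕ) : ℤ) with hP
    refine ⟨e₀ * u * a + r a * v * P, ?_⟩
    intro p hp
    rcases Finset.mem_insert.mp hp with rfl | hps
    · refine ⟨u * (e₀ - r p), ?_⟩
      linear_combination r p * hbez
    · have hIH := he₀ p hps
      have hpP : (p : ℤ) ∣ P := by
        rw [hP]
        exact_mod_cast Int.natCast_dvd_natCast.mpr (Finset.dvd_prod_of_mem _ hps)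
      have key : e₀ * u * a + r a * v * P - r p = (e₀ - r p) + (v * (r a - e₀)) * P := by
        linear_combination e₀ * hbez
      rw [key]
      exact dvd_add hIH (hpP.mul_left _)

/-- Let `z₁ ≠ 0`, `gcd(z₁, w₁) = gcd(z₂, w₂) = 1`, `z₁w₂ - z₂w₁ ≠ 0`, and let `l, ε` be
positive coprime integers with `l` odd. Then there exists an integer `e` with
`gcd(l(z₁e + w₁), ε(z₂e + w₂)) = 1`. -/
theorem stmt_15 (z₁ z₂ w₁ w₂ : ℤ) (hz₁ : z₁ ≠ 0)
    (h1 : Int.gcd z₁ w₁ = 1) (h2 : Int.gcd z₂ w₂ = 1)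
    (hdet : z₁ * w₂ - z₂ * w₁ ≠ 0)
    (l ε : ℤ) (hl : 0 < l) (hε : 0 < ε) (hcop : Int.gcd l ε = 1) (hodd : Odd l) :
    ∃ e : ℤ, Int.gcd (l * (z₁ * e + w₁)) (ε * (z₂ * e + w₂)) = 1 := by
  classical
  set D : ℤ := z₁ * w₂ - z₂ * w₁ with hD
  set N : ℕ := (l * ε * D).natAbs with hNdef
  have hN0 : N ≠ 0 := by
    simp only [hNdef, ne_eq, Int.natAbs_eq_zero, mul_eq_zero, not_or]
    exact ⟨⟨hl.ne', hε.ne'⟩, hdet⟩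
  let r : ℕ → ℤ := fun p =>
    if hp : p.Prime then
      if (p : ℤ) ∣ l then Classical.choose (exists_avoid hp h2)
      else Classical.choose (exists_avoid hp h1)
    else 0
  obtain ⟨e, he⟩ := crt_finset N.primeFactors
    (fun p hp => Nat.prime_of_mem_primeFactors hp) r
  refine ⟨e, ?_⟩
  by_contra hg
  obtain ⟨p, hp, hpa, hpb⟩ :
      ∃ p : ℕ, p.Prime ∧ (p : ℤ) ∣ l * (z₁ * e + w₁) ∧ (p : ℤ) ∣ ε * (z₂ * e + w₂) := by
    rcases eq_or_ne (Int.gcd (l * (z₁ * e + w₁)) (ε * (z₂ * e + w₂))) 0 with h0 | h0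
    · rw [Int.gcd_eq_zero_iff] at h0
      exact ⟨2, Nat.prime_two, h0.1 ▸ dvd_zero _, h0.2 ▸ dvd_zero _⟩
    · set g := Int.gcd (l * (z₁ * e + w₁)) (ε * (z₂ * e + w₂)) with hgdef
      have hg2 : 2 ≤ g := by omega
      have hpf : g.minFac.Prime := Nat.minFac_prime hg
      refine ⟨g.minFac, hpf, ?_, ?_⟩
      · exact dvd_trans (Int.natCast_dvd_natCast.mpr (Nat.minFac_dvd g)) (Int.gcd_dvd_left _ _)
      · exact dvd_trans (Int.natCast_dvd_natCast.mpr (Nat.minFac_dvd g)) (Int.gcd_dvd_right _ _)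
  have hpZ : Prime (p : ℤ) := Int.prime_iff_natAbs_prime.mpr (by simpa using hp)
  -- membership helper
  have memN : (p : ℤ) ∣ l * ε * D → p ∈ N.primeFactors := by
    intro hd
    refine Nat.mem_primeFactors.mpr ⟨hp, ?_, hN0⟩
    rw [hNdef]
    exact Int.natCast_dvd_natCast.mp ((Int.dvd_natAbs).mpr hd)
  -- the two contradiction producers
  have contra2 : (p : ℤ) ∣ l → p ∈ N.primeFactors → (p : ℤ) ∣ z₂ * e + w₂ → False := by
    intro hpl hmem hX₂
    have hre : (p : ℤ) ∣ e - r p := he p hmem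
    have hrp : r p = Classical.choose (exists_avoid hp h2) := by
      simp only [r, dif_pos hp, if_pos hpl]
    have : (p : ℤ) ∣ z₂ * r p + w₂ := by
      have heq : z₂ * r p + w₂ = (z₂ * e + w₂) - z₂ * (e - r p) := by ring
      rw [heq]
      exact dvd_sub hX₂ (hre.mul_left z₂)
    rw [hrp] at this
    exact Classical.choose_spec (exists_avoid hp h2) this
  have contra1 : ¬ (p : ℤ) ∣ l → p ∈ N.primeFactors → (p : ℤ) ∣ z₁ * e + w₁ → False := by
    intro hpl hmem hX₁
    have hre : (p : ℤ) ∣ e - r p := he p hmem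
    have hrp : r p = Classical.choose (exists_avoid hp h1) := by
      simp only [r, dif_pos hp, if_neg hpl]
    have : (p : ℤ) ∣ z₁ * r p + w₁ := by
      have heq : z₁ * r p + w₁ = (z₁ * e + w₁) - z₁ * (e - r p) := by ring
      rw [heq]
      exact dvd_sub hX₁ (hre.mul_left z₁)
    rw [hrp] at this
    exact Classical.choose_spec (exists_avoid hp h1) this
  rcases hpZ.dvd_mul.mp hpa with hpl | hpX₁ <;>
    rcases hpZ.dvd_mul.mp hpb with hpε | hpX₂
  · exact not_dvd_both hp hcop hpl hpε
  · exact contra2 hpl (memN ((hpl.mul_right ε).mul_right D)) hpX₂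
  · have hnl : ¬ (p : ℤ) ∣ l := fun hpl => not_dvd_both hp hcop hpl hpε
    exact contra1 hnl (memN ((hpε.mul_left l).mul_right D)) hpX₁
  · have hpD : (p : ℤ) ∣ D := by
      have heq : D = z₁ * (z₂ * e + w₂) - z₂ * (z₁ * e + w₁) := by rw [hD]; ring
      rw [heq]
      exact dvd_sub (hpX₂.mul_left z₁) (hpX₁.mul_left z₂)
    have hmem := memN (hpD.mul_left (l * ε))
    by_cases hpl : (p : ℤ) ∣ l
    · exact contra2 hpl hmem hpX₂
    · exact contra1 hpl hmem hpX₁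
end
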